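/- arXiv:1903.08232 — 5 statements merged into one kernel-verified Lean document; each statement's English description precedes it below -/
import Mathlib

section
/- The number of $1$-independent sets in any $r$-uniform hypergraph with $n$ vertices and $e$ edges is at most the number of $1$-independent sets in the colex $r$-graph $\mathcal{C}_r(n,e)$. -/
/-- The colex `r`-graph on `[n] = {0, …, n-1}` with `e` edges: the set of `r`-subsets of
`[n]` that have fewer than `e` sets colex-below them, i.e. the first `e` sets in colex order. -/
def colexGraph (n r e : ℕ) : Finset (Finset ℕ) :=
  ((Finset.range n).powersetCard r).filter (fun E =>
    (((Finset.range n).powersetCard r).filter (fun F => toColex F < toColex E)).card < e)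

/-- The number of 1-independent sets of a hypergraph on `[n]`. -/
def oneIndepCount (n : ℕ) (H : Finset (Finset ℕ)) : ℕ :=
  ((Finset.range n).powerset.filter (fun I => ∀ E ∈ H, (I ∩ E).card < 1)).card

/-!
A set is 1-independent exactly when it avoids the vertex span `⋃ H` of `H`, so
`i₁(H) = 2 ^ (n - |⋃ H|)`, which grows as the span shrinks. A family of `e` `r`-sets spanning
`m` vertices has `e ≤ (m choose r)`; and every subset of `[m]` is colex-below any set leaving
`[m]`, so the first `e ≤ (m choose r)` `r`-sets in colex order all lie in `[m]`. Hence the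
colex graph spans no more vertices than `H`.
-/

open Finset

lemma sup_id_subset_of_subset_powersetCard {α : Type*} [DecidableEq α] {s : Finset α} {r : ℕ}
    {H : Finset (Finset α)} (hH : H ⊆ s.powersetCard r) : H.sup id ⊆ s :=
  Finset.sup_le fun _ hE => (mem_powersetCard.1 (hH hE)).1

lemma card_le_choose_card_sup_id {α : Type*} [DecidableEq α] {r : ℕ} {H : Finset (Finset α)}
    (hH : ∀ E ∈ H, E.card = r) : H.card ≤ (H.sup id).card.choose r := by
  rw [← card_powersetCard]
  exact card_le_card fun E hE => mem_powersetCard.2 ⟨le_sup (f := id) hE, hH E hE⟩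

lemma oneIndepCount_eq_two_pow {n : ℕ} {H : Finset (Finset ℕ)} (hH : H.sup id ⊆ range n) :
    oneIndepCount n H = 2 ^ (n - (H.sup id).card) := by
  have hindep : (range n).powerset.filter (fun I => ∀ E ∈ H, (I ∩ E).card < 1) =
      (range n \ H.sup id).powerset := by
    ext I
    simp only [mem_filter, mem_powerset, subset_sdiff, Nat.lt_one_iff, card_eq_zero,
      ← disjoint_iff_inter_eq_empty, Finset.disjoint_sup_right, id]
  rw [oneIndepCount, hindep, card_powerset, card_sdiff_of_subset hH, card_range]

lemma toColex_lt_of_subset_range_of_not_subset_range {m : ℕ} {E F : Finset ℕ}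
    (hF : F ⊆ range m) (hE : ¬ E ⊆ range m) : toColex F < toColex E := by
  obtain ⟨x, hxE, hxm⟩ := not_subset.1 hE
  rw [mem_range, not_lt] at hxm
  rw [Colex.toColex_lt_toColex_iff_exists_forall_lt]
  exact ⟨x, hxE, fun hxF => (mem_range.1 (hF hxF)).not_ge hxm,
    fun y hyF _ => (mem_range.1 (hF hyF)).trans_le hxm⟩

lemma sup_id_colexGraph_subset_range {n r e m : ℕ} (hm : m ≤ n) (he : e ≤ m.choose r) :
    (colexGraph n r e).sup id ⊆ range m := by
  refine Finset.sup_le fun E hE => ?_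
  rw [colexGraph, mem_filter] at hE
  by_contra hEm
  have hbelow : (range m).powersetCard r ⊆
      ((range n).powersetCard r).filter (fun F => toColex F < toColex E) := by
    intro F hF
    rw [mem_powersetCard] at hF
    exact mem_filter.2 ⟨mem_powersetCard.2 ⟨hF.1.trans (range_subset_range.2 hm), hF.2⟩,
      toColex_lt_of_subset_range_of_not_subset_range hF.1 hEm⟩
  have := card_le_card hbelow
  rw [card_powersetCard, card_range] at this
  omega

theorem oneIndep_le_colex (n r e : ℕ) (H : Finset (Finset ℕ))
    (hsub : H ⊆ (Finset.range n).powersetCard r) (hcard : H.card = e) :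
    oneIndepCount n H ≤ oneIndepCount n (colexGraph n r e) := by
  have hspan : H.sup id ⊆ range n := sup_id_subset_of_subset_powersetCard hsub
  have hspan_card : (H.sup id).card ≤ n := by simpa using card_le_card hspan
  have he : e ≤ (H.sup id).card.choose r :=
    hcard ▸ card_le_choose_card_sup_id fun E hE => (mem_powersetCard.1 (hsub hE)).2
  have hcolex : (colexGraph n r e).sup id ⊆ range (H.sup id).card :=
    sup_id_colexGraph_subset_range hspan_card he
  rw [oneIndepCount_eq_two_pow hspan,
    oneIndepCount_eq_two_pow (hcolex.trans (range_subset_range.2 hspan_card))]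
  exact Nat.pow_le_pow_right two_pos (Nat.sub_le_sub_left (by simpa using card_le_card hcolex) n)
end

section
/- Let $\mathcal{H}$ be a hypergraph on vertex set $[n]$ and $0 \le j < i \le n-1$. Then for every $s \ge 1$, the number of $s$-independent sets does not decrease under the $(i,j)$-shift: $i_s(\mathcal{H}_{i\to j}) \ge i_s(\mathcal{H})$. -/
/-!
The `(i,j)`-shift of an edge family is its UV-compression `𝓒 {j} {i}`. The opposite compression
`𝓒 {i} {j}`, which preserves the size of a family, maps the `s`-independent sets of `H` into those
of the shifted hypergraph. A set and its compression agree away from `{i, j}`, so every bound on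
`#(I ∩ E)` this needs reduces to a case check on the memberships of `i` and `j`.
-/

/-- The `(i,j)`-shift of a single edge: replace `i` by `j` when `E ∩ {i,j} = {i}`. -/
def shiftEdge (i j : ℕ) (E : Finset ℕ) : Finset ℕ :=
  if i ∈ E ∧ j ∉ E then insert j (E.erase i) else E

/-- The `(i,j)`-shift of an edge set. -/
def shiftSet (i j : ℕ) (H : Finset (Finset ℕ)) : Finset (Finset ℕ) :=
  H.image (shiftEdge i j) ∪ H.filter (fun E => shiftEdge i j E ∈ H)

/-- The number of `s`-independent sets of a hypergraph on `[n] = {0,…,n-1}`. -/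
def indepCount (n s : ℕ) (H : Finset (Finset ℕ)) : ℕ :=
  ((Finset.range n).powerset.filter (fun I => ∀ E ∈ H, (I ∩ E).card < s)).card

open Finset UV
open scoped FinsetFamily

section Compress

variable {α : Type*} [DecidableEq α] {u v : α} {s : Finset α}

lemma compress_singleton (huv : u ≠ v) (a : Finset α) :
    compress {u} {v} a = if u ∉ a ∧ v ∈ a then insert u (a.erase v) else a := by
  simp only [compress, disjoint_singleton_left, singleton_subset_iff, sup_eq_union]
  split_ifs
  · ext; simp; grind
  · rfl

lemma compress_singleton_subset_insert (a : Finset α) : compress {u} {v} a ⊆ insert u a := by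
  rcases eq_or_ne u v with rfl | huv
  · simp
  rw [compress_singleton huv]
  split_ifs
  · exact insert_subset_insert u (erase_subset v a)
  · exact subset_insert u a

lemma compress_singleton_sdiff (hu : u ∈ s) (hv : v ∈ s) (a : Finset α) :
    compress {u} {v} a \ s = a \ s := by
  rcases eq_or_ne u v with rfl | huv
  · rw [compress_self]
  rw [compress_singleton huv]
  split_ifs
  · ext; simp; grind
  · rfl

lemma mem_compress_singleton_left (huv : u ≠ v) (a : Finset α) :
    u ∈ compress {u} {v} a ↔ u ∈ a ∨ v ∈ a := by
  rw [compress_singleton huv]; split_ifs <;> simp <;> tauto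

lemma mem_compress_singleton_right (huv : u ≠ v) (a : Finset α) :
    v ∈ compress {u} {v} a ↔ u ∈ a ∧ v ∈ a := by
  rw [compress_singleton huv]; split_ifs <;> simp [huv.symm] <;> tauto

lemma card_inter_eq_card_inter_sdiff_pair_add (huv : u ≠ v) (a b : Finset α) :
    #(a ∩ b) = #((a \ {u, v}) ∩ (b \ {u, v})) + (if u ∈ a ∧ u ∈ b then 1 else 0)
      + (if v ∈ a ∧ v ∈ b then 1 else 0) := by
  rw [← card_sdiff_add_card_inter _ {u, v}, inter_comm _ {u, v},
    ← filter_mem_eq_inter (s := {u, v}), card_filter, sum_pair huv, add_assoc,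
    show (a ∩ b) \ {u, v} = (a \ {u, v}) ∩ (b \ {u, v}) from inf_sdiff]
  simp only [mem_inter]

lemma card_compress_inter_compress_le (huv : u ≠ v) (a b : Finset α) :
    #(compress {u} {v} a ∩ compress {v} {u} b) ≤ #(a ∩ b) := by
  rw [card_inter_eq_card_inter_sdiff_pair_add huv, card_inter_eq_card_inter_sdiff_pair_add huv a]
  simp only [compress_singleton_sdiff, mem_insert, mem_singleton, true_or, or_true,
    mem_compress_singleton_left, mem_compress_singleton_right, huv, huv.symm, Ne, not_false_eq_true]
  grind

lemma card_inter_compress_le_max (huv : u ≠ v) (a b : Finset α) :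
    #(a ∩ compress {v} {u} b) ≤ max #(a ∩ b) #(compress {u} {v} a ∩ b) := by
  rw [card_inter_eq_card_inter_sdiff_pair_add huv, card_inter_eq_card_inter_sdiff_pair_add huv a,
    card_inter_eq_card_inter_sdiff_pair_add huv (compress {u} {v} a)]
  simp only [compress_singleton_sdiff, mem_insert, mem_singleton, true_or, or_true,
    mem_compress_singleton_left, mem_compress_singleton_right, huv, huv.symm, Ne, not_false_eq_true]
  grind

lemma card_compress_inter_le_max (huv : u ≠ v) (a b : Finset α) :
    #(compress {u} {v} a ∩ b) ≤ max #(a ∩ b) #(a ∩ compress {v} {u} b) := by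
  rw [card_inter_eq_card_inter_sdiff_pair_add huv, card_inter_eq_card_inter_sdiff_pair_add huv a,
    card_inter_eq_card_inter_sdiff_pair_add huv a (compress {v} {u} b)]
  simp only [compress_singleton_sdiff, mem_insert, mem_singleton, true_or, or_true,
    mem_compress_singleton_left, mem_compress_singleton_right, huv, huv.symm, Ne, not_false_eq_true]
  grind

end Compress

lemma shiftEdge_eq_compress (i j : ℕ) (E : Finset ℕ) : shiftEdge i j E = compress {j} {i} E := by
  rcases eq_or_ne j i with rfl | hji
  · simp [shiftEdge]
  simp only [compress_singleton hji, shiftEdge, and_comm]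

lemma shiftSet_eq_compression (i j : ℕ) (H : Finset (Finset ℕ)) :
    shiftSet i j H = 𝓒 {j} {i} H := by
  ext F
  simp only [shiftSet, shiftEdge_eq_compress, mem_union, mem_image, mem_filter, mem_compression]
  constructor
  · rintro (⟨G, hG, rfl⟩ | hF)
    · by_cases hGF : compress {j} {i} G ∈ H
      · exact Or.inl ⟨hGF, by rwa [compress_idem]⟩
      · exact Or.inr ⟨hGF, G, hG, rfl⟩
    · exact Or.inl hF
  · rintro (hF | ⟨-, hF⟩)
    · exact Or.inr hF
    · exact Or.inl hF

section Hypergraph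

variable {α : Type*} [DecidableEq α]

def indepSets (U : Finset α) (s : ℕ) (H : Finset (Finset α)) : Finset (Finset α) :=
  {I ∈ U.powerset | ∀ E ∈ H, #(I ∩ E) < s}

lemma mem_indepSets {U I : Finset α} {s : ℕ} {H : Finset (Finset α)} :
    I ∈ indepSets U s H ↔ I ⊆ U ∧ ∀ E ∈ H, #(I ∩ E) < s := by
  rw [indepSets, mem_filter, mem_powerset]

theorem compression_indepSets_subset {u v : α} {U : Finset α} (huv : u ≠ v) (hu : u ∈ U) (s : ℕ)
    (H : Finset (Finset α)) :
    𝓒 {u} {v} (indepSets U s H) ⊆ indepSets U s (𝓒 {v} {u} H) := by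
  intro A hA
  rcases mem_compression.1 hA with ⟨hA, hCA⟩ | ⟨-, B, hB, rfl⟩
  · rw [mem_indepSets] at hA hCA ⊢
    refine ⟨hA.1, fun F hF ↦ ?_⟩
    rcases mem_compression.1 hF with ⟨hF, -⟩ | ⟨-, G, hG, rfl⟩
    · exact hA.2 F hF
    · exact (card_inter_compress_le_max huv A G).trans_lt (max_lt (hA.2 G hG) (hCA.2 G hG))
  · rw [mem_indepSets] at hB ⊢
    refine ⟨(compress_singleton_subset_insert B).trans (insert_subset hu hB.1), fun F hF ↦ ?_⟩
    rcases mem_compression.1 hF with ⟨hF, hCF⟩ | ⟨-, G, hG, rfl⟩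
    · exact (card_compress_inter_le_max huv B F).trans_lt (max_lt (hB.2 F hF) (hB.2 _ hCF))
    · exact (card_compress_inter_compress_le huv B G).trans_lt (hB.2 G hG)

end Hypergraph

theorem indepCount_le_shift_general (n s i j : ℕ) (hj : j < i) (hi : i ≤ n - 1)
    (H : Finset (Finset ℕ)) :
    indepCount n s H ≤ indepCount n s (shiftSet i j H) := by
  have hin : i ∈ range n := mem_range.2 (by omega)
  calc indepCount n s H = #(𝓒 {i} {j} (indepSets (range n) s H)) := (card_compression _ _ _).symm
    _ ≤ #(indepSets (range n) s (𝓒 {j} {i} H)) :=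
      card_le_card (compression_indepSets_subset hj.ne' hin s H)
    _ = indepCount n s (shiftSet i j H) := by rw [shiftSet_eq_compression]; rfl

theorem indepCount_le_shift (n s i j : ℕ) (hs : 1 ≤ s) (hj : j < i) (hi : i ≤ n - 1)
    (H : Finset (Finset ℕ)) (hsub : ∀ E ∈ H, E ⊆ Finset.range n) :
    indepCount n s H ≤ indepCount n s (shiftSet i j H) :=
  indepCount_le_shift_general n s i j hj hi H
end

section
/- If $\mathcal{H}$ is an $r$-uniform hypergraph on $[n]$ and $A \preccurlyeq B$ are $r$-sets with $B$ an edge of $\mathcal{H}$, then $A$ is an edge of the iterated shift $\mathcal{H}_{B \to A}$ obtained by applying the shifts $b_1 \to a_1, b_2\to a_2, \dots, b_r \to a_r$ in order. -/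
/-- `ℋ_{B→A}`: apply the shifts `b₁ → a₁, …, b_r → a_r` in order, where
`a₁ < ⋯ < a_r` and `b₁ < ⋯ < b_r` are the elements of `A` and `B`. -/
def multiShift (H : Finset (Finset ℕ)) (B A : Finset ℕ) : Finset (Finset ℕ) :=
  (List.zip (B.sort (· ≤ ·)) (A.sort (· ≤ ·))).foldl (fun H' p => shiftSet p.1 p.2 H') H

open Finset

lemma shiftEdge_insert {a b : ℕ} {T : Finset ℕ} (hb : b ∉ T) (ha : a ∉ T) :
    shiftEdge b a (insert b T) = insert a T := by
  rcases eq_or_ne a b with rfl | hab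
  · simp [shiftEdge]
  · rw [shiftEdge, if_pos ⟨mem_insert_self b T, by simp [hab, ha]⟩, erase_insert hb]

lemma shiftEdge_mem_shiftSet (i j : ℕ) {H : Finset (Finset ℕ)} {E : Finset ℕ} (hE : E ∈ H) :
    shiftEdge i j E ∈ shiftSet i j H :=
  mem_union_left _ (mem_image_of_mem _ hE)

lemma foldl_shiftEdge_mem_foldl_shiftSet (l : List (ℕ × ℕ)) {H : Finset (Finset ℕ)}
    {E : Finset ℕ} (hE : E ∈ H) :
    l.foldl (fun E p => shiftEdge p.1 p.2 E) E ∈ l.foldl (fun H p => shiftSet p.1 p.2 H) H := by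
  induction l generalizing H E with
  | nil => exact hE
  | cons p l ih => exact ih (shiftEdge_mem_shiftSet p.1 p.2 hE)

lemma foldl_shiftEdge_zip {la lb : List ℕ} (hab : List.Forall₂ (· ≤ ·) la lb)
    (hla : la.Pairwise (· < ·)) (hlb : lb.Pairwise (· < ·)) (S : Finset ℕ)
    (hS : ∀ x ∈ S, ∀ a ∈ la, x < a) :
    (List.zip lb la).foldl (fun E p => shiftEdge p.1 p.2 E) (S ∪ lb.toFinset) =
      S ∪ la.toFinset := by
  induction hab generalizing S with
  | nil => rfl
  | @cons a b la lb hab _ ih =>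
    obtain ⟨ha_lt, hla⟩ := List.pairwise_cons.mp hla
    obtain ⟨hb_lt, hlb⟩ := List.pairwise_cons.mp hlb
    have hS_lt_a : ∀ x ∈ S, x < a := fun x hx => hS x hx a List.mem_cons_self
    have hb : b ∉ S ∪ lb.toFinset := by
      simp only [mem_union, List.mem_toFinset, not_or]
      exact ⟨fun h => (hS_lt_a b h).not_ge hab, fun h => (hb_lt b h).false⟩
    have ha : a ∉ S ∪ lb.toFinset := by
      simp only [mem_union, List.mem_toFinset, not_or]
      exact ⟨fun h => (hS_lt_a a h).false, fun h => (hab.trans_lt (hb_lt a h)).false⟩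
    have hS' : ∀ x ∈ insert a S, ∀ a' ∈ la, x < a' := by
      rintro x hx a' ha'
      rcases mem_insert.mp hx with rfl | hx
      · exact ha_lt a' ha'
      · exact hS x hx a' (List.mem_cons_of_mem a ha')
    calc (List.zip (b :: lb) (a :: la)).foldl (fun E p => shiftEdge p.1 p.2 E)
          (S ∪ (b :: lb).toFinset)
        = (List.zip lb la).foldl (fun E p => shiftEdge p.1 p.2 E) (insert a S ∪ lb.toFinset) := by
          rw [List.zip_cons_cons, List.foldl_cons, List.toFinset_cons, union_insert,
            shiftEdge_insert hb ha, insert_union]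
      _ = insert a S ∪ la.toFinset := ih hla hlb _ hS'
      _ = S ∪ (a :: la).toFinset := by rw [List.toFinset_cons, union_insert, insert_union]

theorem mem_multiShift_general (H : Finset (Finset ℕ))
    (A B : Finset ℕ)
    (hAB : List.Forall₂ (· ≤ ·) (A.sort (· ≤ ·)) (B.sort (· ≤ ·)))
    (hBH : B ∈ H) :
    A ∈ multiShift H B A := by
  have hBA := foldl_shiftEdge_zip hAB A.sortedLT_sort.pairwise B.sortedLT_sort.pairwise ∅
    (by simp)
  simp only [empty_union, sort_toFinset] at hBA
  have hmem := foldl_shiftEdge_mem_foldl_shiftSet (List.zip (B.sort (· ≤ ·)) (A.sort (· ≤ ·))) hBH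
  rw [hBA] at hmem
  exact hmem

theorem mem_multiShift (n r : ℕ) (H : Finset (Finset ℕ))
    (hunif : ∀ E ∈ H, E ⊆ Finset.range n ∧ E.card = r)
    (A B : Finset ℕ) (hA : A.card = r) (hB : B.card = r)
    (hAB : List.Forall₂ (· ≤ ·) (A.sort (· ≤ ·)) (B.sort (· ≤ ·)))
    (hBH : B ∈ H) :
    A ∈ multiShift H B A :=
  mem_multiShift_general H A B hAB hBH
end

section
/- Let $\mathcal{H}$ be a shifted $r$-uniform hypergraph on $[n]$, let $2 \le s \le r$, and let $I \subseteq [n]$ with $|I| \ge s$. Define the minimal edge $E_0(I) = I_s \cup J$, where $I_s$ is the set of $s$ smallest elements of $I$ and $J$ is the set of $r-s$ smallest elements of $[n] \setminus I_s$. Then $I$ is $s$-independent in $\mathcal{H}$ if and only if $E_0(I)$ is not an edge of $\mathcal{H}$. -/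
/-- The set of the `s` smallest elements of `I`. -/
def sSmallest (s : ℕ) (I : Finset ℕ) : Finset ℕ := ((I.sort (· ≤ ·)).take s).toFinset

/-- The minimal edge `E₀(I)`: the `s` smallest elements of `I` together with the
`r - s` smallest elements of `[n]` outside of them. -/
def minimalEdge (n r s : ℕ) (I : Finset ℕ) : Finset ℕ :=
  sSmallest s I ∪ sSmallest (r - s) (Finset.range n \ sSmallest s I)

/-!
If `E ∈ H` meets `I` in at least `s` vertices and `E ≠ E₀(I)`, then one shift `i ↦ j` with
`j < i` produces an edge of `H` that still meets `I` in at least `s` vertices: while `E` misses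
some of the `s` smallest elements of `I`, trade a larger element of `I ∩ E` for one of them;
once it contains them all, trade a vertex outside `E₀(I)` for a missing one of `E₀(I)`, which is
among the `r - s` smallest vertices of `[n]` outside them, hence smaller.
Each shift lowers the sum of the vertices of the edge, so the process ends at `E₀(I) ∈ H`.
-/

section

open Finset

lemma sSmallest_subset (s : ℕ) (I : Finset ℕ) : sSmallest s I ⊆ I := fun _ hx =>
  (mem_sort _).1 (List.mem_of_mem_take (List.mem_toFinset.1 hx))

lemma card_sSmallest {s : ℕ} {I : Finset ℕ} (h : s ≤ #I) : #(sSmallest s I) = s := by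
  rw [sSmallest, List.toFinset_card_of_nodup ((sort_nodup _ _).sublist (List.take_sublist _ _)),
    List.length_take, length_sort]
  exact min_eq_left h

lemma sSmallest_lt {s : ℕ} {I : Finset ℕ} {a b : ℕ} (ha : a ∈ sSmallest s I) (hb : b ∈ I)
    (hb' : b ∉ sSmallest s I) : a < b := by
  rw [sSmallest, List.mem_toFinset] at ha hb'
  have hsorted := I.sortedLT_sort.pairwise
  rw [← List.take_append_drop s (I.sort (· ≤ ·))] at hsorted
  have hb_drop : b ∈ (I.sort (· ≤ ·)).drop s := by
    have hb_sort := (mem_sort (· ≤ ·)).2 hb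
    rw [← List.take_append_drop s (I.sort (· ≤ ·)), List.mem_append] at hb_sort
    exact hb_sort.resolve_left hb'
  exact List.pairwise_append.1 hsorted |>.2.2 a ha b hb_drop

lemma card_minimalEdge {n r s : ℕ} {I : Finset ℕ} (hsr : s ≤ r) (hrn : r ≤ n)
    (hI : I ⊆ range n) (hIs : s ≤ #I) : #(minimalEdge n r s I) = r := by
  have hcompl : #(range n \ sSmallest s I) = n - s := by
    rw [card_sdiff_of_subset ((sSmallest_subset s I).trans hI), card_range, card_sSmallest hIs]
  have hdisj : Disjoint (sSmallest s I) (sSmallest (r - s) (range n \ sSmallest s I)) :=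
    disjoint_sdiff.mono_right (sSmallest_subset _ _)
  rw [minimalEdge, card_union_of_disjoint hdisj, card_sSmallest hIs,
    card_sSmallest (by omega)]
  omega

lemma insert_erase_mem_of_shiftSet_eq {i j : ℕ} {H : Finset (Finset ℕ)}
    (h : shiftSet i j H = H) {E : Finset ℕ} (hE : E ∈ H) (hi : i ∈ E) (hj : j ∉ E) :
    insert j (E.erase i) ∈ H := by
  have hmem : shiftEdge i j E ∈ shiftSet i j H := mem_union_left _ (mem_image_of_mem _ hE)
  rwa [h, shiftEdge, if_pos ⟨hi, hj⟩] at hmem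

lemma sum_insert_erase_lt {E : Finset ℕ} {i j : ℕ} (hi : i ∈ E) (hj : j ∉ E) (hji : j < i) :
    ∑ x ∈ insert j (E.erase i), x < ∑ x ∈ E, x := by
  rw [sum_insert fun h => hj (mem_of_mem_erase h), ← sum_erase_add E _ hi]
  omega

lemma mem_of_shift_descent {n : ℕ} {H : Finset (Finset ℕ)}
    (hshift : ∀ i j : ℕ, j < i → i < n → shiftSet i j H = H) (P : Finset ℕ → Prop)
    {F : Finset ℕ} (hstep : ∀ E ∈ H, P E → E ≠ F →
      ∃ i ∈ E, ∃ j ∉ E, j < i ∧ i < n ∧ P (insert j (E.erase i)))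
    {E : Finset ℕ} (hE : E ∈ H) (hP : P E) : F ∈ H := by
  induction hsum : ∑ x ∈ E, x using Nat.strong_induction_on generalizing E with
  | _ m ih =>
    by_cases hEF : E = F
    · exact hEF ▸ hE
    obtain ⟨i, hi, j, hj, hji, hin, hP'⟩ := hstep E hE hP hEF
    exact ih _ (hsum ▸ sum_insert_erase_lt hi hj hji)
      (insert_erase_mem_of_shiftSet_eq (hshift i j hji hin) hE hi hj) hP' rfl

lemma card_inter_le_card_inter_insert_erase {I E : Finset ℕ} {j : ℕ} (hjI : j ∈ I)
    (hjE : j ∉ E) (i : ℕ) : #(I ∩ E) ≤ #(I ∩ insert j (E.erase i)) := by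
  rw [inter_insert_of_mem hjI, inter_erase,
    card_insert_of_notMem fun h => hjE (mem_inter.1 (mem_of_mem_erase h)).2]
  have := pred_card_le_card_erase (s := I ∩ E) (a := i)
  omega

lemma exists_shift_of_not_sSmallest_subset {s : ℕ} {I E : Finset ℕ} (hIs : s ≤ #I)
    (hIE : s ≤ #(I ∩ E)) (hsub : ¬ sSmallest s I ⊆ E) :
    ∃ i ∈ E, ∃ j ∉ E, j < i ∧ s ≤ #(I ∩ insert j (E.erase i)) := by
  obtain ⟨j, hjI, hjE⟩ := not_subset.1 hsub
  have hIE_sub : ¬ I ∩ E ⊆ sSmallest s I := fun h =>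
    hsub (eq_of_subset_of_card_le h (by rw [card_sSmallest hIs]; exact hIE) ▸ inter_subset_right)
  obtain ⟨i, hiIE, hiI⟩ := not_subset.1 hIE_sub
  exact ⟨i, (mem_inter.1 hiIE).2, j, hjE, sSmallest_lt hjI (mem_inter.1 hiIE).1 hiI,
    hIE.trans (card_inter_le_card_inter_insert_erase (sSmallest_subset s I hjI) hjE i)⟩

lemma exists_shift_of_sSmallest_subset {n r s : ℕ} {I E : Finset ℕ} (hEn : E ⊆ range n)
    (hcard : #E = #(minimalEdge n r s I)) (hsub : sSmallest s I ⊆ E)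
    (hne : E ≠ minimalEdge n r s I) :
    ∃ i ∈ E, ∃ j ∉ E, j < i ∧ sSmallest s I ⊆ insert j (E.erase i) := by
  obtain ⟨j, hjE₀, hjE⟩ := not_subset.1 fun h => hne (eq_of_subset_of_card_le h hcard.le).symm
  obtain ⟨i, hiE, hiE₀⟩ := not_subset.1 fun h => hne (eq_of_subset_of_card_le h hcard.ge)
  rw [minimalEdge, mem_union, not_or] at hiE₀
  have hjJ : j ∈ sSmallest (r - s) (range n \ sSmallest s I) :=
    (mem_union.1 hjE₀).resolve_left fun h => hjE (hsub h)
  refine ⟨i, hiE, j, hjE, sSmallest_lt hjJ (mem_sdiff.2 ⟨hEn hiE, hiE₀.1⟩) hiE₀.2, ?_⟩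
  intro x hx
  exact mem_insert_of_mem (mem_erase.2 ⟨fun h => hiE₀.1 (h ▸ hx), hsub hx⟩)

lemma exists_shift_of_ne_minimalEdge {n r s : ℕ} {I E : Finset ℕ} (hsr : s ≤ r) (hrn : r ≤ n)
    (hI : I ⊆ range n) (hIs : s ≤ #I) (hEn : E ⊆ range n) (hEr : #E = r)
    (hIE : s ≤ #(I ∩ E)) (hne : E ≠ minimalEdge n r s I) :
    ∃ i ∈ E, ∃ j ∉ E, j < i ∧ s ≤ #(I ∩ insert j (E.erase i)) := by
  by_cases hsub : sSmallest s I ⊆ E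
  · obtain ⟨i, hi, j, hj, hji, hsub'⟩ := exists_shift_of_sSmallest_subset hEn
      (hEr.trans (card_minimalEdge hsr hrn hI hIs).symm) hsub hne
    refine ⟨i, hi, j, hj, hji, ?_⟩
    calc s = #(sSmallest s I) := (card_sSmallest hIs).symm
      _ ≤ _ := card_le_card (subset_inter (sSmallest_subset s I) hsub')
  · exact exists_shift_of_not_sSmallest_subset hIs hIE hsub

end

theorem sIndep_iff_minimalEdge_not_mem_general (n r s : ℕ) (hsr : s ≤ r) (hrn : r ≤ n)
    (H : Finset (Finset ℕ))
    (hshift : ∀ i j : ℕ, j < i → i < n → shiftSet i j H = H)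
    (hunif : ∀ E ∈ H, E ⊆ Finset.range n ∧ E.card = r)
    (I : Finset ℕ) (hI : I ⊆ Finset.range n) (hIs : s ≤ I.card) :
    (∀ E ∈ H, (I ∩ E).card < s) ↔ minimalEdge n r s I ∉ H := by
  constructor
  · intro hindep hE₀
    have hsub : sSmallest s I ⊆ I ∩ minimalEdge n r s I :=
      Finset.subset_inter (sSmallest_subset s I) Finset.subset_union_left
    have := Finset.card_le_card hsub
    have := hindep _ hE₀
    rw [card_sSmallest hIs] at *
    omega
  · intro hE₀ E hE
    by_contra! hIE
    refine hE₀ (mem_of_shift_descent hshift (fun E => s ≤ (I ∩ E).card) ?_ hE hIE)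
    intro E hE hIE hne
    obtain ⟨hEn, hEr⟩ := hunif E hE
    obtain ⟨i, hi, j, hj, hji, hIE'⟩ :=
      exists_shift_of_ne_minimalEdge hsr hrn hI hIs hEn hEr hIE hne
    exact ⟨i, hi, j, hj, hji, Finset.mem_range.1 (hEn hi), hIE'⟩

theorem sIndep_iff_minimalEdge_not_mem (n r s : ℕ) (hs2 : 2 ≤ s) (hsr : s ≤ r) (hrn : r ≤ n)
    (H : Finset (Finset ℕ))
    (hshift : ∀ i j : ℕ, j < i → i < n → shiftSet i j H = H)
    (hunif : ∀ E ∈ H, E ⊆ Finset.range n ∧ E.card = r)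
    (I : Finset ℕ) (hI : I ⊆ Finset.range n) (hIs : s ≤ I.card) :
    (∀ E ∈ H, (I ∩ E).card < s) ↔ minimalEdge n r s I ∉ H :=
  sIndep_iff_minimalEdge_not_mem_general n r s hsr hrn H hshift hunif I hI hIs
end

section
/- Let $\mathcal{H}$ be a shifted $3$-graph on $[n]$ and suppose $\mathcal{H}' = \mathcal{H} + \{i,j,k\}$ (with $i<j<k$) is also shifted. Then $i_2(\mathcal{H}') = i_2(\mathcal{H}) - c_{ijk}$, where $c_{ijk} = 2^{n-1}$ if $\{i,j,k\}=\{0,1,2\}$; $c_{ijk} = 2^{n-k}$ if $i=0$, $j=1$, $k \ne 2$; $c_{ijk} = 2^{n-k-1}$ if $i=0$ and $j > 1$; and $c_{ijk} = 0$ if $i \ne 0$. -/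
/-- The cost `c_{ijk}` of adding the edge `{i,j,k}` (with `i < j < k`) to a shifted
`3`-graph on `[n]`. -/
def cost (n i j k : ℕ) : ℕ :=
  if i = 0 ∧ j = 1 ∧ k = 2 then 2 ^ (n - 1)
  else if i = 0 ∧ j = 1 then 2 ^ (n - k)
  else if i = 0 then 2 ^ (n - k - 1)
  else 0

/-!
The sets that are `2`-independent in `H` but not in `H + {i,j,k}` are the `2`-independent sets
of `H` meeting `{i,j,k}` in at least two points. Since `H` is shifted, such a set is determined
up to its part above `k` by its trace on `{0,…,k}`: if two of its points lie in an edge of `H`,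
shifting them down onto two points of the trace gives an edge of `H` through the trace. So their
number is `2^(n-k-1)` times the number of admissible traces. Since `H + {i,j,k}` is shifted, every
triple obtained from `{i,j,k}` by moving one vertex down to a new position is an edge of `H`; these
edges leave no admissible trace when `i > 0`, only `{0,k}` and `{1,k}` when `i = 0, j = 1, k ≥ 3`,
and only `{j,k}` when `i = 0, j ≥ 2`. When `{i,j,k} = {0,1,2}` the graph `H` is empty, since every
nonempty shifted `3`-graph contains `{0,1,2}`, and the four subsets of `{0,1,2}` of size `≥ 2`
remain.
-/

open Finset

def IsShifted (n : ℕ) (H : Finset (Finset ℕ)) : Prop :=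
  ∀ a b : ℕ, b < a → a < n → shiftSet a b H = H

def IsTwoIndep (H : Finset (Finset ℕ)) (I : Finset ℕ) : Prop :=
  ∀ E ∈ H, #(I ∩ E) < 2

instance (H : Finset (Finset ℕ)) : DecidablePred (IsTwoIndep H) :=
  fun I => inferInstanceAs (Decidable (∀ E ∈ H, #(I ∩ E) < 2))

def lostIndepSets (n : ℕ) (H : Finset (Finset ℕ)) (e : Finset ℕ) : Finset (Finset ℕ) :=
  (range n).powerset.filter fun I => IsTwoIndep H I ∧ 2 ≤ #(I ∩ e)

section ShiftEdge

variable {a b p : ℕ} {E : Finset ℕ}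

lemma shiftEdge_of_mem_of_notMem (ha : a ∈ E) (hb : b ∉ E) :
    shiftEdge a b E = insert b (E.erase a) :=
  if_pos ⟨ha, hb⟩

lemma mem_shiftEdge_self (ha : a ∈ E) : b ∈ shiftEdge a b E := by
  unfold shiftEdge
  split_ifs with h
  · exact mem_insert_self _ _
  · exact not_not.1 fun hb => h ⟨ha, hb⟩

lemma mem_shiftEdge_of_ne (hp : p ∈ E) (hpa : p ≠ a) : p ∈ shiftEdge a b E := by
  unfold shiftEdge
  split_ifs
  · exact mem_insert_of_mem (mem_erase.2 ⟨hpa, hp⟩)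
  · exact hp

end ShiftEdge

lemma isTwoIndep_iff {H : Finset (Finset ℕ)} {I : Finset ℕ} :
    IsTwoIndep H I ↔ ∀ E ∈ H, ∀ p ∈ I, ∀ q ∈ I, p ∈ E → q ∈ E → p = q := by
  refine forall₂_congr fun E _ => ?_
  rw [Nat.lt_succ_iff, card_le_one]
  simp only [mem_inter]
  grind

lemma IsTwoIndep.mono {H : Finset (Finset ℕ)} {I J : Finset ℕ} (hI : IsTwoIndep H I)
    (hJI : J ⊆ I) : IsTwoIndep H J :=
  fun E hE => (card_le_card (inter_subset_inter_right hJI)).trans_lt (hI E hE)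

lemma mem_and_mem_of_two_le_card_inter {T : Finset ℕ} {a b c : ℕ}
    (h : 2 ≤ #(T ∩ {a, b, c})) : (a ∈ T ∧ b ∈ T) ∨ (a ∈ T ∧ c ∈ T) ∨ (b ∈ T ∧ c ∈ T) := by
  obtain ⟨p, hp, q, hq, hpq⟩ := one_lt_card.1 h
  simp only [mem_inter, mem_insert, mem_singleton] at hp hq
  rcases hp with ⟨hpT, rfl | rfl | rfl⟩ <;> rcases hq with ⟨hqT, rfl | rfl | rfl⟩ <;> tauto

lemma card_filter_inter_mem {α : Type*} [DecidableEq α] {U V : Finset α} (hVU : V ⊆ U)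
    {S : Finset (Finset α)} (hS : S ⊆ V.powerset) :
    #(U.powerset.filter fun I => I ∩ V ∈ S) = #S * 2 ^ #(U \ V) := by
  have hsplit : ∀ s ∈ S, ∀ A ⊆ U \ V, (s ∪ A) ∩ V = s ∧ (s ∪ A) \ V = A := by
    intro s hs A hA
    have hsV := mem_powerset.1 (hS hs)
    constructor <;> ext x <;> grind
  rw [← card_powerset (U \ V), ← card_product]
  refine card_bij' (fun I _ => (I ∩ V, I \ V)) (fun p _ => p.1 ∪ p.2) ?_ ?_ ?_ ?_
  · intro I hI
    simp only [mem_filter, mem_powerset, mem_product] at hI ⊢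
    exact ⟨hI.2, sdiff_subset_sdiff hI.1 subset_rfl⟩
  · rintro ⟨s, A⟩ h
    simp only [mem_filter, mem_powerset, mem_product] at h ⊢
    rw [(hsplit s h.1 A h.2).1]
    exact ⟨union_subset ((mem_powerset.1 (hS h.1)).trans hVU) (h.2.trans sdiff_subset), h.1⟩
  · intro I _
    exact sup_inf_sdiff I V
  · rintro ⟨s, A⟩ h
    simp only [mem_product, mem_powerset] at h
    simp only [hsplit s h.1 A h.2]

namespace IsShifted

variable {n : ℕ} {H : Finset (Finset ℕ)}

lemma shiftEdge_mem (hH : IsShifted n H) {E : Finset ℕ} (hE : E ∈ H) {a b : ℕ} (hba : b < a)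
    (han : a < n) : shiftEdge a b E ∈ H := by
  rw [← hH a b hba han]
  exact mem_union_left _ (mem_image_of_mem _ hE)

lemma shiftEdge_mem_of_insert {e : Finset ℕ} (hH : IsShifted n (insert e H)) {a b : ℕ}
    (ha : a ∈ e) (hb : b ∉ e) (hba : b < a) (han : a < n) : shiftEdge a b e ∈ H := by
  refine (mem_insert.1 (hH.shiftEdge_mem (mem_insert_self e H) hba han)).resolve_left ?_
  exact fun h => hb (h ▸ mem_shiftEdge_self ha)

lemma insert_mem_of_subset (hH : IsShifted n H) {E F : Finset ℕ} (hE : E ∈ H)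
    (hEn : E ⊆ range n) (hFE : F ⊆ E) (hcard : #E = #F + 1) {r : ℕ} (hr : r ∉ F)
    (hbelow : ∀ s < r, s ∈ F) : insert r F ∈ H := by
  obtain ⟨s, hsF, rfl⟩ := exists_eq_insert_iff.2 ⟨hFE, hcard.symm⟩
  rcases (not_lt.1 fun h => hsF (hbelow s h)).eq_or_lt with rfl | hrs
  · exact hE
  · have := hH.shiftEdge_mem hE hrs (mem_range.1 (hEn (mem_insert_self s F)))
    rwa [shiftEdge_of_mem_of_notMem (mem_insert_self s F) (by simp [hr, hrs.ne]),
      erase_insert hsF] at this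

lemma range_card_mem (hH : IsShifted n H) {E : Finset ℕ} (hE : E ∈ H) (hEn : E ⊆ range n) :
    range #E ∈ H := by
  -- moving a vertex `≥ #E` onto a missing vertex `< #E` lowers the sum of the vertices
  induction hsum : ∑ x ∈ E, x using Nat.strong_induction_on generalizing E with
  | _ N ih =>
  by_cases hEq : E = range #E
  · rwa [← hEq]
  obtain ⟨a, haE, ha⟩ : ∃ a ∈ E, a ∉ range #E :=
    not_subset.1 fun h => hEq (eq_of_subset_of_card_le h (by simp))
  obtain ⟨b, hb, hbE⟩ : ∃ b ∈ range #E, b ∉ E :=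
    not_subset.1 fun h => hEq (eq_of_subset_of_card_le h (by simp)).symm
  have hba : b < a := by simp only [mem_range, not_lt] at ha hb; omega
  have hbE' : b ∉ E.erase a := fun h => hbE (mem_of_mem_erase h)
  have hE' : insert b (E.erase a) ∈ H :=
    shiftEdge_of_mem_of_notMem haE hbE ▸ hH.shiftEdge_mem hE hba (mem_range.1 (hEn haE))
  have hcard : #(insert b (E.erase a)) = #E := by
    rw [card_insert_of_notMem hbE', card_erase_add_one haE]
  have hsum' : ∑ x ∈ insert b (E.erase a), x + a = N + b := by
    rw [sum_insert hbE', add_assoc, sum_erase_add _ _ haE, hsum, add_comm]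
  rw [← hcard]
  refine ih _ (by omega) hE' (insert_subset ?_ ((erase_subset a E).trans hEn)) rfl
  exact mem_range.2 (hba.trans (mem_range.1 (hEn haE)))

lemma eq_empty_of_range_three_notMem (hH : IsShifted n H)
    (hunif : ∀ F ∈ H, F ⊆ range n ∧ #F = 3) (h : range 3 ∉ H) : H = ∅ :=
  eq_empty_of_forall_notMem fun E hE => h ((hunif E hE).2 ▸ hH.range_card_mem hE (hunif E hE).1)

lemma isTwoIndep_pair (hH : IsShifted n H) (hunif : ∀ F ∈ H, F ⊆ range n ∧ #F = 3)
    {p q r : ℕ} (hpq : p ≠ q) (hr : r ∉ ({p, q} : Finset ℕ)) (hbelow : ∀ s < r, s = p ∨ s = q)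
    (hnot : insert r {p, q} ∉ H) : IsTwoIndep H {p, q} := by
  intro E hE
  by_contra h
  have hsub : {p, q} ⊆ E := by
    rw [← inter_eq_left]
    exact eq_of_subset_of_card_le inter_subset_left (by rw [card_pair hpq]; omega)
  refine hnot (hH.insert_mem_of_subset hE (hunif E hE).1 hsub ?_ hr (by simpa using hbelow))
  rw [(hunif E hE).2, card_pair hpq]

lemma isTwoIndep_of_inter_range (hH : IsShifted n H) {I : Finset ℕ} (hI : I ⊆ range n)
    {m x y : ℕ} (hx : x ∈ I ∩ range m) (hy : y ∈ I ∩ range m) (hxy : x ≠ y)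
    (hT : IsTwoIndep H (I ∩ range m)) : IsTwoIndep H I := by
  simp only [mem_inter, mem_range] at hx hy
  rw [isTwoIndep_iff] at hT ⊢
  have hlow : ∀ E ∈ H, ∀ p ∈ I, ∀ q ∈ I, p ∈ E → q ∈ E → p < m → q < m → p = q :=
    fun E hE p hp q hq hpE hqE hpm hqm =>
      hT E hE p (by simp [hp, hpm]) q (by simp [hq, hqm]) hpE hqE
  intro E hE p hp q hq hpE hqE
  by_contra hpq
  -- shift the larger point(s) of the pair `p, q` down onto points of `I ∩ range m`
  wlog hlt : p < q generalizing p q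
  · exact this q hq p hp hqE hpE (Ne.symm hpq) (by omega)
  have hqn : q < n := mem_range.1 (hI hq)
  by_cases hqm : q < m
  · exact hpq (hlow E hE p hp q hq hpE hqE (by omega) hqm)
  by_cases hpm : p < m
  · obtain ⟨z, hz, hzm, hzp⟩ : ∃ z ∈ I, z < m ∧ z ≠ p :=
      if h : x = p then ⟨y, hy.1, hy.2, h ▸ hxy.symm⟩ else ⟨x, hx.1, hx.2, h⟩
    exact hzp (hlow _ (hH.shiftEdge_mem hE (by omega : z < q) hqn) z hz p hp
      (mem_shiftEdge_self hqE) (mem_shiftEdge_of_ne hpE hpq) hzm hpm)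
  · have hE₁ := hH.shiftEdge_mem hE (by omega : x < q) hqn
    have hE₂ := hH.shiftEdge_mem hE₁ (by omega : y < p) (by omega)
    exact hxy (hlow _ hE₂ x hx.1 y hy.1
      (mem_shiftEdge_of_ne (mem_shiftEdge_self hqE) (by omega))
      (mem_shiftEdge_self (mem_shiftEdge_of_ne hpE hpq)) hx.2 hy.2)

lemma card_lostIndepSets (hH : IsShifted n H) {e : Finset ℕ} {m : ℕ} (hem : e ⊆ range m)
    (hmn : m ≤ n) : #(lostIndepSets n H e) = #(lostIndepSets m H e) * 2 ^ (n - m) := by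
  have hmn' : range m ⊆ range n := range_subset_range.2 hmn
  have hcard : n - m = #(range n \ range m) := by
    rw [card_sdiff_of_subset hmn', card_range, card_range]
  rw [hcard, ← card_filter_inter_mem (S := lostIndepSets m H e) hmn' (filter_subset _ _)]
  congr 1
  refine filter_congr fun I hI => ?_
  have hIe : I ∩ range m ∩ e = I ∩ e := by rw [inter_assoc, inter_eq_right.2 hem]
  simp only [lostIndepSets, mem_filter, mem_powerset, inter_subset_right, hIe, true_and]
  refine ⟨fun ⟨hind, h2⟩ => ⟨hind.mono inter_subset_left, h2⟩, fun ⟨hind, h2⟩ => ⟨?_, h2⟩⟩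
  obtain ⟨x, hx, y, hy, hxy⟩ := one_lt_card.1 h2
  have hsub : I ∩ e ⊆ I ∩ range m := inter_subset_inter_left hem
  exact hH.isTwoIndep_of_inter_range (mem_powerset.1 hI) (hsub hx) (hsub hy) hxy hind

end IsShifted

lemma indepCount_eq_indepCount_insert_add (n : ℕ) (H : Finset (Finset ℕ)) (e : Finset ℕ) :
    indepCount n 2 H = indepCount n 2 (insert e H) + #(lostIndepSets n H e) := by
  have hsplit := card_filter_add_card_filter_not (s := (range n).powerset.filter (IsTwoIndep H))
    (fun I => #(I ∩ e) < 2)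
  rw [filter_filter, filter_filter] at hsplit
  unfold indepCount lostIndepSets
  change #((range n).powerset.filter (IsTwoIndep H)) = _
  rw [← hsplit]
  congr 1
  · refine congrArg card (filter_congr fun I _ => ?_)
    rw [forall_mem_insert]
    exact and_comm
  · exact congrArg card (filter_congr fun I _ => by rw [not_lt])

section Cases

variable {n j k : ℕ} {H : Finset (Finset ℕ)}

lemma lostIndepSets_eq_empty_of_pos {m i : ℕ} (hsh' : IsShifted n (insert {i, j, k} H))
    (hi : 0 < i) (hij : i < j) (hjk : j < k) (hkn : k < n) : lostIndepSets m H {i, j, k} = ∅ := by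
  refine filter_eq_empty_iff.2 fun T _ ⟨hind, hcard⟩ => ?_
  have h0 : 0 ∉ ({i, j, k} : Finset ℕ) := by simp; omega
  have hmoved : ∀ a ∈ ({i, j, k} : Finset ℕ), shiftEdge a 0 {i, j, k} ∈ H := fun a ha =>
    hsh'.shiftEdge_mem_of_insert ha h0 (by simp at ha; omega) (by simp at ha; omega)
  rw [isTwoIndep_iff] at hind
  rcases mem_and_mem_of_two_le_card_inter hcard with ⟨hp, hq⟩ | ⟨hp, hq⟩ | ⟨hp, hq⟩
  · exact hij.ne (hind _ (hmoved k (by simp)) _ hp _ hq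
      (mem_shiftEdge_of_ne (by simp) (by omega)) (mem_shiftEdge_of_ne (by simp) (by omega)))
  · exact (hij.trans hjk).ne (hind _ (hmoved j (by simp)) _ hp _ hq
      (mem_shiftEdge_of_ne (by simp) (by omega)) (mem_shiftEdge_of_ne (by simp) (by omega)))
  · exact hjk.ne (hind _ (hmoved i (by simp)) _ hp _ hq
      (mem_shiftEdge_of_ne (by simp) (by omega)) (mem_shiftEdge_of_ne (by simp) (by omega)))

lemma card_lostIndepSets_range_three : #(lostIndepSets 3 ∅ {0, 1, 2}) = 4 := by
  decide

lemma lostIndepSets_zero_one (hsh : IsShifted n H) (hunif : ∀ F ∈ H, F ⊆ range n ∧ #F = 3)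
    (hE : ({0, 1, k} : Finset ℕ) ∉ H) (hsh' : IsShifted n (insert {0, 1, k} H))
    (hk : 3 ≤ k) (hkn : k < n) : lostIndepSets (k + 1) H {0, 1, k} = {{0, k}, {1, k}} := by
  have hmoved : ∀ x, 2 ≤ x → x < k → shiftEdge k x {0, 1, k} ∈ H := fun x h2 hxk =>
    hsh'.shiftEdge_mem_of_insert (by simp) (by simp; omega) hxk hkn
  ext T
  simp only [lostIndepSets, mem_filter, mem_powerset, mem_insert, mem_singleton]
  constructor
  · rintro ⟨hTk, hind, hcard⟩
    rw [isTwoIndep_iff] at hind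
    have h01 : ¬(0 ∈ T ∧ 1 ∈ T) := fun ⟨h0, h1⟩ => zero_ne_one (hind _
      (hmoved 2 le_rfl (by omega)) 0 h0 1 h1 (mem_shiftEdge_of_ne (by simp) (by omega))
      (mem_shiftEdge_of_ne (by simp) (by omega)))
    have hpair : ∀ z < 2, z ∈ T → k ∈ T → T = {z, k} := by
      intro z hz hzT hkT
      ext x
      simp only [mem_insert, mem_singleton]
      refine ⟨fun hx => ?_, by rintro (rfl | rfl) <;> assumption⟩
      have hxk : x < k + 1 := mem_range.1 (hTk hx)
      by_contra! hne
      rcases Nat.lt_or_ge x 2 with hx2 | hx2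
      · rcases (by omega : (x = 0 ∧ z = 1) ∨ (x = 1 ∧ z = 0)) with ⟨rfl, rfl⟩ | ⟨rfl, rfl⟩
        exacts [h01 ⟨hx, hzT⟩, h01 ⟨hzT, hx⟩]
      · exact hne.1 (hind _ (hmoved x hx2 (by omega)) x hx z hzT (mem_shiftEdge_self (by simp))
          (mem_shiftEdge_of_ne (by simp; omega) (by omega)))
    rcases mem_and_mem_of_two_le_card_inter hcard with h | ⟨h0, hkT⟩ | ⟨h1, hkT⟩
    · exact absurd h h01
    · exact Or.inl (hpair 0 (by omega) h0 hkT)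
    · exact Or.inr (hpair 1 (by omega) h1 hkT)
  · have hsub : ∀ z < 2, ({z, k} : Finset ℕ) ⊆ range (k + 1) := by
      intro z hz x hx
      simp only [mem_insert, mem_singleton, mem_range] at hx ⊢
      omega
    rintro (rfl | rfl)
    · refine ⟨hsub 0 (by omega), hsh.isTwoIndep_pair hunif (r := 1) (by omega) (by simp; omega)
        (by omega) (by rwa [insert_comm]), one_lt_card.2 ⟨0, by simp, k, by simp, by omega⟩⟩
    · refine ⟨hsub 1 (by omega), hsh.isTwoIndep_pair hunif (r := 0) (by omega) (by simp; omega)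
        (by omega) hE, one_lt_card.2 ⟨1, by simp, k, by simp, by omega⟩⟩

lemma lostIndepSets_zero_of_two_le (hsh : IsShifted n H) (hunif : ∀ F ∈ H, F ⊆ range n ∧ #F = 3)
    (hE : ({0, j, k} : Finset ℕ) ∉ H) (hsh' : IsShifted n (insert {0, j, k} H))
    (hj : 2 ≤ j) (hjk : j < k) (hkn : k < n) : lostIndepSets (k + 1) H {0, j, k} = {{j, k}} := by
  have hmoved : ∀ x, 0 < x → x < k → x ≠ j → shiftEdge k x {0, j, k} ∈ H := fun x h0 hxk hxj =>
    hsh'.shiftEdge_mem_of_insert (by simp) (by simp; omega) hxk hkn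
  have h01k : shiftEdge j 1 {0, j, k} ∈ H :=
    hsh'.shiftEdge_mem_of_insert (by simp) (by simp; omega) (by omega) (by omega)
  ext T
  simp only [lostIndepSets, mem_filter, mem_powerset, mem_singleton]
  constructor
  · rintro ⟨hTk, hind, hcard⟩
    rw [isTwoIndep_iff] at hind
    have h0j : ¬(0 ∈ T ∧ j ∈ T) := fun ⟨h0, hjT⟩ => (by omega : 0 ≠ j) (hind _
      (hmoved 1 one_pos (by omega) (by omega)) 0 h0 j hjT
      (mem_shiftEdge_of_ne (by simp) (by omega)) (mem_shiftEdge_of_ne (by simp) (by omega)))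
    have h0k : ¬(0 ∈ T ∧ k ∈ T) := fun ⟨h0, hkT⟩ => (by omega : 0 ≠ k) (hind _ h01k 0 h0 k hkT
      (mem_shiftEdge_of_ne (by simp) (by omega)) (mem_shiftEdge_of_ne (by simp) (by omega)))
    obtain ⟨hjT, hkT⟩ : j ∈ T ∧ k ∈ T := by
      rcases mem_and_mem_of_two_le_card_inter hcard with h | h | h
      exacts [absurd h h0j, absurd h h0k, h]
    ext x
    simp only [mem_insert, mem_singleton]
    refine ⟨fun hx => ?_, by rintro (rfl | rfl) <;> assumption⟩
    have hxk : x < k + 1 := mem_range.1 (hTk hx)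
    by_contra! hne
    rcases Nat.eq_zero_or_pos x with rfl | hx0
    · exact h0j ⟨hx, hjT⟩
    · exact hne.1 (hind _ (hmoved x hx0 (by omega) hne.1) x hx j hjT
        (mem_shiftEdge_self (by simp)) (mem_shiftEdge_of_ne (by simp) (by omega)))
  · rintro rfl
    refine ⟨?_, hsh.isTwoIndep_pair hunif (r := 0) (by omega) (by simp; omega) (by omega) hE,
      one_lt_card.2 ⟨j, by simp, k, by simp, by omega⟩⟩
    intro x hx
    simp only [mem_insert, mem_singleton, mem_range] at hx ⊢
    omega

end Cases

theorem cost_of_added_edge (n i j k : ℕ) (hij : i < j) (hjk : j < k) (hkn : k < n)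
    (H : Finset (Finset ℕ))
    (hunif : ∀ F ∈ H, F ⊆ Finset.range n ∧ F.card = 3)
    (hE : ({i, j, k} : Finset ℕ) ∉ H)
    (hsh : ∀ a b : ℕ, b < a → a < n → shiftSet a b H = H)
    (hsh' : ∀ a b : ℕ, b < a → a < n →
      shiftSet a b (insert ({i, j, k} : Finset ℕ) H) = insert ({i, j, k} : Finset ℕ) H) :
    indepCount n 2 H = indepCount n 2 (insert ({i, j, k} : Finset ℕ) H) + cost n i j k := by
  have hsub : ({i, j, k} : Finset ℕ) ⊆ range (k + 1) := by
    intro x hx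
    simp only [mem_insert, mem_singleton, mem_range] at hx ⊢
    omega
  rw [indepCount_eq_indepCount_insert_add, IsShifted.card_lostIndepSets hsh hsub hkn]
  congr 1
  rcases Nat.eq_zero_or_pos i with rfl | hi
  · rcases (by omega : j = 1 ∨ 2 ≤ j) with rfl | hj
    · rcases (by omega : k = 2 ∨ 3 ≤ k) with rfl | hk
      · obtain rfl : H = ∅ := IsShifted.eq_empty_of_range_three_notMem hsh hunif hE
        rw [card_lostIndepSets_range_three, cost, if_pos ⟨rfl, rfl, rfl⟩,
          show n - 1 = n - (2 + 1) + 2 by omega, pow_add]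
        ring
      · have hne : ({0, k} : Finset ℕ) ≠ {1, k} := by
          rw [Ne, Finset.ext_iff]
          push Not
          exact ⟨0, by simp; omega⟩
        rw [lostIndepSets_zero_one hsh hunif hE hsh' hk hkn, card_pair hne, cost,
          if_neg (by omega), if_pos ⟨rfl, rfl⟩, show n - k = n - (k + 1) + 1 by omega, pow_succ]
        ring
    · rw [lostIndepSets_zero_of_two_le hsh hunif hE hsh' hj hjk hkn, card_singleton, one_mul, cost,
        if_neg (by omega), if_neg (by omega), if_pos rfl, Nat.sub_sub]
  · rw [lostIndepSets_eq_empty_of_pos hsh' hi hij hjk hkn, card_empty, zero_mul, cost,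
      if_neg (by omega), if_neg (by omega), if_neg (by omega)]
end
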